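/- arXiv:2003.03280 — 3 statements merged into one kernel-verified Lean document; each statement's English description precedes it below -/
import Mathlib

section
/- Let W be an ℝ^k-valued random vector with E‖W‖^{2+δ} < ∞ for some δ ∈ [0,1], and let W' be a centered Gaussian vector with the same covariance matrix as W (and W centered). Then E‖W'‖^{2+δ} ≤ 3^{1/2 + δ/4} E‖W‖^{2+δ}. -/
open MeasureTheory ProbabilityTheory
open scoped ENNReal NNReal RealInnerProductSpace

/-!
Each coordinate `⟪t, W'⟫` has characteristic function `s ↦ exp (-s² E⟪t, W⟫² / 2)`, hence law
`N(0, E⟪t, W⟫²)` and fourth moment `3 (E⟪t, W⟫²)²`. Minkowski's inequality in `L²` applied to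
`‖W'‖² = ∑ᵢ W'ᵢ²` then gives `E‖W'‖⁴ ≤ 3 (E‖W‖²)²`. Lyapunov's inequality `‖f‖_p ≤ ‖f‖_q` for
`p ≤ q` on a probability space supplies the two remaining steps
`E‖W'‖^{2+δ} ≤ (E‖W'‖⁴)^{(2+δ)/4}` and `(E‖W‖²)^{(2+δ)/2} ≤ E‖W‖^{2+δ}`.
-/

section LpNorm

variable {α E : Type*} {mα : MeasurableSpace α} {μ : Measure α} [NormedAddCommGroup E]

lemma lpNorm_le_lpNorm_of_exponent_le [IsProbabilityMeasure μ] {f : α → E} {p q : ℝ≥0∞}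
    (hpq : p ≤ q) (hf : MemLp f q μ) : lpNorm f p μ ≤ lpNorm f q μ := by
  rw [← toReal_eLpNorm hf.aestronglyMeasurable, ← toReal_eLpNorm hf.aestronglyMeasurable]
  exact ENNReal.toReal_mono hf.eLpNorm_ne_top
    (eLpNorm_le_eLpNorm_of_exponent_le hpq hf.aestronglyMeasurable)

lemma rpow_integral_norm_rpow_le_integral_norm_rpow [IsProbabilityMeasure μ] {f : α → E}
    {p q : ℝ} (hp : 0 < p) (hpq : p ≤ q) (hf : MemLp f (.ofReal q) μ) :
    (∫ x, ‖f x‖ ^ p ∂μ) ^ (q / p) ≤ ∫ x, ‖f x‖ ^ q ∂μ := by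
  have hq : 0 < q := hp.trans_le hpq
  have h := lpNorm_le_lpNorm_of_exponent_le (ENNReal.ofReal_le_ofReal hpq) hf
  rw [lpNorm_eq_integral_norm_rpow_toReal (by simpa) ENNReal.ofReal_ne_top hf.1,
    lpNorm_eq_integral_norm_rpow_toReal (by simpa) ENNReal.ofReal_ne_top hf.1,
    ENNReal.toReal_ofReal hp.le, ENNReal.toReal_ofReal hq.le] at h
  have hIp : 0 ≤ ∫ x, ‖f x‖ ^ p ∂μ := integral_nonneg fun _ ↦ by positivity
  have hIq : 0 ≤ ∫ x, ‖f x‖ ^ q ∂μ := integral_nonneg fun _ ↦ by positivity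
  calc (∫ x, ‖f x‖ ^ p ∂μ) ^ (q / p) = ((∫ x, ‖f x‖ ^ p ∂μ) ^ p⁻¹) ^ q := by
        rw [← Real.rpow_mul hIp, div_eq_inv_mul]
    _ ≤ ((∫ x, ‖f x‖ ^ q ∂μ) ^ q⁻¹) ^ q := by gcongr
    _ = ∫ x, ‖f x‖ ^ q ∂μ := Real.rpow_inv_rpow hIq hq.ne'

lemma lpNorm_two_eq_sqrt_integral_sq {f : α → ℝ} (hf : AEStronglyMeasurable f μ) :
    lpNorm f 2 μ = √(∫ x, f x ^ 2 ∂μ) := by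
  rw [lpNorm_eq_integral_norm_rpow_toReal two_ne_zero ENNReal.ofNat_ne_top hf, Real.sqrt_eq_rpow]
  simp [one_div]

end LpNorm

lemma integral_pow_four_gaussianReal (v : ℝ≥0) :
    ∫ x, x ^ 4 ∂gaussianReal 0 v = 3 * (v : ℝ) ^ 2 := by
  -- The mgf is `exp (a t²)`; differentiating `p t * exp (a t²)` replaces `p` by `p' + 2 a t p`,
  -- and four such steps starting from `p = 1` leave `12 a² = 3 v²` at `t = 0`.
  set a : ℝ := v / 2
  set E : ℝ → ℝ := fun t ↦ Real.exp (a * t ^ 2)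
  have hE (t : ℝ) : HasDerivAt E (2 * a * t * E t) t := by
    convert ((hasDerivAt_pow 2 t).const_mul a).exp using 1; simp [E]; ring
  have deriv_mul_E (p p' q : ℝ → ℝ) (hp : ∀ t, HasDerivAt p (p' t) t)
      (hq : ∀ t, q t = p' t + 2 * a * t * p t) :
      deriv (fun t ↦ p t * E t) = fun t ↦ q t * E t := by
    funext t
    rw [((hp t).fun_mul (hE t)).deriv, hq]
    ring
  have hmgf : mgf (fun x ↦ x) (gaussianReal 0 v) = fun t ↦ 1 * E t := by
    rw [mgf_fun_id_gaussianReal]; funext t; simp only [E, a]; ring_nf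
  rw [show (fun x : ℝ ↦ x ^ 4) = (fun x ↦ x) ^ 4 from rfl, ← iteratedDeriv_mgf_zero (by simp),
    hmgf]
  simp only [iteratedDeriv_succ, iteratedDeriv_zero]
  rw [deriv_mul_E _ 0 (fun t ↦ 2 * a * t) (fun t ↦ hasDerivAt_const t 1) (fun t ↦ by simp),
    deriv_mul_E _ (fun _ ↦ 2 * a) (fun t ↦ 2 * a + 4 * a ^ 2 * t ^ 2)
      (fun t ↦ by simpa using (hasDerivAt_id t).const_mul (2 * a)) (fun t ↦ by ring),
    deriv_mul_E _ (fun t ↦ 8 * a ^ 2 * t) (fun t ↦ 12 * a ^ 2 * t + 8 * a ^ 3 * t ^ 3)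
      (fun t ↦ (((hasDerivAt_pow 2 t).const_mul (4 * a ^ 2)).const_add (2 * a)).congr_deriv
        (by push_cast; ring))
      (fun t ↦ by ring),
    deriv_mul_E _ (fun t ↦ 12 * a ^ 2 + 24 * a ^ 3 * t ^ 2)
      (fun t ↦ 12 * a ^ 2 + 24 * a ^ 3 * t ^ 2 + 2 * a * t * (12 * a ^ 2 * t + 8 * a ^ 3 * t ^ 3))
      (fun t ↦ (((hasDerivAt_id' t).const_mul (12 * a ^ 2)).fun_add
        ((hasDerivAt_pow 3 t).const_mul (8 * a ^ 3))).congr_deriv (by push_cast; ring))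
      (fun t ↦ rfl)]
  simp [E, a]
  ring

section RandomVariables

variable {Ω : Type*} {mΩ : MeasurableSpace Ω} {P : Measure Ω}

/-- The characteristic function of `Y` is that of `N(0, E[Z Zᵀ])`. -/
def HasGaussianCharFun {E : Type*} [NormedAddCommGroup E] [InnerProductSpace ℝ E]
    (Y Z : Ω → E) (P : Measure Ω) : Prop :=
  ∀ t, ∫ ω, Complex.exp (Complex.I * ⟪t, Y ω⟫) ∂P =
    (Real.exp (-(1 / 2) * ∫ ω, ⟪t, Z ω⟫ ^ 2 ∂P) : ℂ)

lemma HasGaussianCharFun.hasLaw_inner {E : Type*} [NormedAddCommGroup E] [InnerProductSpace ℝ E]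
    [MeasurableSpace E] [BorelSpace E] [IsProbabilityMeasure P] {Y Z : Ω → E}
    (hchar : HasGaussianCharFun Y Z P) (hY : AEMeasurable Y P) (t : E) :
    HasLaw (fun ω ↦ ⟪t, Y ω⟫) (gaussianReal 0 (∫ ω, ⟪t, Z ω⟫ ^ 2 ∂P).toNNReal) P where
  map_eq := by
    have : IsProbabilityMeasure (P.map fun ω ↦ ⟪t, Y ω⟫) := P.isProbabilityMeasure_map (by fun_prop)
    refine Measure.ext_of_charFun (funext fun s ↦ ?_)
    rw [charFun_apply_real, integral_map (by fun_prop) (by fun_prop), charFun_gaussianReal,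
      Real.coe_toNNReal _ (integral_nonneg fun _ ↦ sq_nonneg _)]
    have hs := hchar (s • t)
    simp only [real_inner_smul_left, mul_pow, integral_const_mul] at hs
    convert hs using 2
    · funext ω; push_cast; ring_nf
    · push_cast; ring_nf

lemma memLp_sq_of_hasLaw_gaussianReal {X : Ω → ℝ} {v : ℝ≥0}
    (hX : HasLaw X (gaussianReal 0 v) P) : MemLp (fun ω ↦ X ω ^ 2) 2 P := by
  have h4 : Integrable (fun x : ℝ ↦ x ^ 4) (P.map X) := by
    rw [hX.map_eq]
    exact integrable_pow_of_mem_interior_integrableExpSet (by simp) 4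
  refine (memLp_two_iff_integrable_sq (hX.aemeasurable.pow_const 2).aestronglyMeasurable).2 ?_
  simpa [Function.comp_def, ← pow_mul] using h4.comp_aemeasurable hX.aemeasurable

lemma lpNorm_sq_of_hasLaw_gaussianReal {X : Ω → ℝ} {v : ℝ≥0}
    (hX : HasLaw X (gaussianReal 0 v) P) : lpNorm (fun ω ↦ X ω ^ 2) 2 P = √3 * v := by
  have h4 : ∫ ω, X ω ^ 4 ∂P = 3 * (v : ℝ) ^ 2 :=
    (hX.integral_comp (f := fun x ↦ x ^ 4) (by fun_prop)).trans (integral_pow_four_gaussianReal v)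
  rw [lpNorm_two_eq_sqrt_integral_sq (hX.aemeasurable.pow_const 2).aestronglyMeasurable]
  simp_rw [← pow_mul]
  rw [h4, Real.sqrt_mul (by norm_num), Real.sqrt_sq v.coe_nonneg]

variable {ι : Type*} [Fintype ι] {Y : Ω → EuclideanSpace ℝ ι}

lemma integral_norm_sq_eq_sum_integral_sq (hY : MemLp Y 2 P) :
    ∫ ω, ‖Y ω‖ ^ 2 ∂P = ∑ i, ∫ ω, Y ω i ^ 2 ∂P := by
  simp_rw [EuclideanSpace.real_norm_sq_eq]
  refine integral_finsetSum _ fun i _ ↦ ?_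
  have hi := memLp_piLp_iff.1 hY i
  exact (memLp_two_iff_integrable_sq hi.1).1 hi

lemma memLp_four_of_hasLaw_gaussianReal {v : ι → ℝ≥0}
    (hY : ∀ i, HasLaw (fun ω ↦ Y ω i) (gaussianReal 0 (v i)) P) : MemLp Y 4 P :=
  memLp_piLp_iff.2 fun i ↦ (hY i).hasGaussianLaw.memLp (by norm_num)

lemma integral_norm_pow_four_le_of_hasLaw_gaussianReal {v : ι → ℝ≥0}
    (hY : ∀ i, HasLaw (fun ω ↦ Y ω i) (gaussianReal 0 (v i)) P) :
    ∫ ω, ‖Y ω‖ ^ 4 ∂P ≤ 3 * (∑ i, (v i : ℝ)) ^ 2 := by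
  have hsum : (fun ω ↦ ‖Y ω‖ ^ 2) = ∑ i, fun ω ↦ Y ω i ^ 2 := by
    funext ω
    simp [EuclideanSpace.real_norm_sq_eq]
  have hmeas : AEStronglyMeasurable (fun ω ↦ ‖Y ω‖ ^ 2) P := by
    rw [hsum]
    exact Finset.aestronglyMeasurable_sum _ fun i _ ↦ (memLp_sq_of_hasLaw_gaussianReal (hY i)).1
  have hminkowski : lpNorm (fun ω ↦ ‖Y ω‖ ^ 2) 2 P ≤ √3 * ∑ i, (v i : ℝ) := by
    rw [hsum, Finset.mul_sum]
    refine (lpNorm_sum_le (fun i _ ↦ memLp_sq_of_hasLaw_gaussianReal (hY i))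
      (by norm_num)).trans_eq ?_
    simp_rw [lpNorm_sq_of_hasLaw_gaussianReal (hY _)]
  rw [lpNorm_two_eq_sqrt_integral_sq hmeas, Real.sqrt_le_left (by positivity)] at hminkowski
  simpa [← pow_mul, mul_pow] using hminkowski

variable [IsProbabilityMeasure P] {Z : Ω → EuclideanSpace ℝ ι}

lemma HasGaussianCharFun.hasLaw_eval (hchar : HasGaussianCharFun Y Z P) (hY : AEMeasurable Y P)
    (i : ι) : HasLaw (fun ω ↦ Y ω i) (gaussianReal 0 (∫ ω, Z ω i ^ 2 ∂P).toNNReal) P := by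
  classical
  simpa [EuclideanSpace.inner_single_left] using hchar.hasLaw_inner hY (EuclideanSpace.single i 1)

lemma HasGaussianCharFun.memLp_four (hchar : HasGaussianCharFun Y Z P) (hY : AEMeasurable Y P) :
    MemLp Y 4 P :=
  memLp_four_of_hasLaw_gaussianReal (hchar.hasLaw_eval hY)

lemma HasGaussianCharFun.integral_norm_pow_four_le (hchar : HasGaussianCharFun Y Z P)
    (hY : AEMeasurable Y P) (hZ : MemLp Z 2 P) :
    ∫ ω, ‖Y ω‖ ^ 4 ∂P ≤ 3 * (∫ ω, ‖Z ω‖ ^ 2 ∂P) ^ 2 := by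
  have h := integral_norm_pow_four_le_of_hasLaw_gaussianReal (hchar.hasLaw_eval hY)
  simp_rw [Real.coe_toNNReal _ (integral_nonneg fun _ ↦ sq_nonneg _)] at h
  rwa [integral_norm_sq_eq_sum_integral_sq hZ]

end RandomVariables

theorem gaussian_moment_comparison_general {k : ℕ} {Ω : Type*} [MeasureSpace Ω]
    [IsProbabilityMeasure (ℙ : Measure Ω)]
    (δ : ℝ) (hδ : δ ∈ Set.Icc (0 : ℝ) 1)
    (W W' : Ω → EuclideanSpace ℝ (Fin k))
    (hWm : AEMeasurable W) (hW'm : AEMeasurable W')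
    (hWint : Integrable (fun ω => ‖W ω‖ ^ (2 + δ)))
    (hGauss : ∀ t : EuclideanSpace ℝ (Fin k),
      ∫ ω, Complex.exp (Complex.I * ((inner ℝ t (W' ω) : ℝ) : ℂ)) =
        (Real.exp (-(1 / 2) * ∫ ω, ((inner ℝ t (W ω) : ℝ)) ^ 2) : ℂ)) :
    ∫ ω, ‖W' ω‖ ^ (2 + δ) ≤ (3 : ℝ) ^ ((1 : ℝ) / 2 + δ / 4) * ∫ ω, ‖W ω‖ ^ (2 + δ) := by
  obtain ⟨hδ0, hδ1⟩ := hδ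
  have hchar : HasGaussianCharFun W' W ℙ := hGauss
  have hWp : MemLp W (.ofReal (2 + δ)) := by
    refine (integrable_norm_rpow_iff hWm.aestronglyMeasurable (by simp; linarith) (by simp)).1 ?_
    rwa [ENNReal.toReal_ofReal (by linarith)]
  have hW2 : MemLp W 2 := hWp.mono_exponent (by
    rw [← ENNReal.ofReal_ofNat]; exact ENNReal.ofReal_le_ofReal (by linarith))
  have hW'4 : MemLp W' (.ofReal 4) := by simpa using hchar.memLp_four hW'm
  have h4 : ∫ ω, ‖W' ω‖ ^ (4 : ℝ) ≤ 3 * (∫ ω, ‖W ω‖ ^ (2 : ℝ)) ^ 2 := by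
    simpa only [Real.rpow_ofNat] using hchar.integral_norm_pow_four_le hW'm hW2
  have hA : 0 ≤ ∫ ω, ‖W' ω‖ ^ (2 + δ) := integral_nonneg fun _ ↦ by positivity
  have hM : 0 ≤ ∫ ω, ‖W ω‖ ^ (2 : ℝ) := integral_nonneg fun _ ↦ by positivity
  calc ∫ ω, ‖W' ω‖ ^ (2 + δ)
      = ((∫ ω, ‖W' ω‖ ^ (2 + δ)) ^ (4 / (2 + δ))) ^ ((2 + δ) / 4) := by
        rw [← Real.rpow_mul hA, div_mul_div_cancel₀', div_self, Real.rpow_one] <;> positivity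
    _ ≤ (∫ ω, ‖W' ω‖ ^ (4 : ℝ)) ^ ((2 + δ) / 4) := by
        gcongr
        exact rpow_integral_norm_rpow_le_integral_norm_rpow (by positivity) (by linarith) hW'4
    _ ≤ (3 * (∫ ω, ‖W ω‖ ^ (2 : ℝ)) ^ 2) ^ ((2 + δ) / 4) := by gcongr
    _ = (3 : ℝ) ^ ((1 : ℝ) / 2 + δ / 4) * (∫ ω, ‖W ω‖ ^ (2 : ℝ)) ^ ((2 + δ) / 2) := by
        rw [Real.mul_rpow (by norm_num) (by positivity), ← Real.rpow_natCast, ← Real.rpow_mul hM]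
        ring_nf
    _ ≤ (3 : ℝ) ^ ((1 : ℝ) / 2 + δ / 4) * ∫ ω, ‖W ω‖ ^ (2 + δ) := by
        gcongr
        exact rpow_integral_norm_rpow_le_integral_norm_rpow two_pos (by linarith) hWp

/-- If `W` is centered with `E‖W‖^{2+δ} < ∞` for some `δ ∈ [0,1]` and `W'` is a centered
Gaussian vector with the same covariance as `W`, then
`E‖W'‖^{2+δ} ≤ 3^{1/2+δ/4} E‖W‖^{2+δ}`. -/
theorem gaussian_moment_comparison {k : ℕ} {Ω : Type*} [MeasureSpace Ω]
    [IsProbabilityMeasure (ℙ : Measure Ω)]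
    (δ : ℝ) (hδ : δ ∈ Set.Icc (0 : ℝ) 1)
    (W W' : Ω → EuclideanSpace ℝ (Fin k))
    (hWm : AEMeasurable W) (hW'm : AEMeasurable W')
    (hWcent : ∫ ω, W ω = 0)
    (hWint : Integrable (fun ω => ‖W ω‖ ^ (2 + δ)))
    (hGauss : ∀ t : EuclideanSpace ℝ (Fin k),
      ∫ ω, Complex.exp (Complex.I * ((inner ℝ t (W' ω) : ℝ) : ℂ)) =
        (Real.exp (-(1 / 2) * ∫ ω, ((inner ℝ t (W ω) : ℝ)) ^ 2) : ℂ)) :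
    ∫ ω, ‖W' ω‖ ^ (2 + δ) ≤ (3 : ℝ) ^ ((1 : ℝ) / 2 + δ / 4) * ∫ ω, ‖W ω‖ ^ (2 + δ) :=
  gaussian_moment_comparison_general δ hδ W W' hWm hW'm hWint hGauss
end

section
/- Let h ∈ C³_b(ℝ^k, ℝ) with bounded derivatives up to order 3, let δ ∈ (0,1], and v, w, w' ∈ ℝ^k. Set γ = h(v+w) − h(v+w') − h⁽¹⁾(v)(w−w') − ½ (h⁽²⁾(v)(w,w) − h⁽²⁾(v)(w',w')). Then |γ| ≤ 6^{−δ} ‖h⁽²⁾‖_∞^{1−δ} ‖h⁽³⁾‖_∞^{δ} ( ‖w‖^{2+δ} + ‖w‖^{2(1−δ)}‖w'‖^{3δ} + ‖w‖^{3δ}‖w'‖^{2(1−δ)} + ‖w'‖^{2+δ} ). -/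
/-!
Along the segment `t ↦ v + t • u`, the remainder
`R u = h (v + u) - h v - Dh(v) u - ½ D²h(v)[u, u]` is the second-order Taylor remainder at `1`
of a function of one real variable. Two applications of the mean value inequality bound it by
`M₂ ‖u‖²` from `‖D²h‖ ≤ M₂`, and by `M₃ ‖u‖³ / 6` from the `M₃`-Lipschitz continuity of `D²h`.
The interpolation `min a b ≤ a ^ (1 - δ) * b ^ δ` turns these into
`6 ^ (-δ) M₂ ^ (1 - δ) M₃ ^ δ ‖u‖ ^ (2 + δ)`, and `γ = R w - R w'`.
-/

open Set Nat

section OneVariable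

variable {E : Type*} [NormedAddCommGroup E] [NormedSpace ℝ E]

theorem norm_le_pow_succ_div_factorial_of_hasDerivAt {F F' : ℝ → E} {C : ℝ} {n : ℕ}
    (hF : ∀ t, HasDerivAt F (F' t) t) (hF0 : F 0 = 0)
    (hF' : ∀ t, 0 ≤ t → ‖F' t‖ ≤ C * t ^ n / n !) {t : ℝ} (ht : 0 ≤ t) :
    ‖F t‖ ≤ C * t ^ (n + 1) / (n + 1)! := by
  have hB (s : ℝ) : HasDerivAt (fun s ↦ C * s ^ (n + 1) / (n + 1)!) (C * s ^ n / n !) s := by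
    refine (((hasDerivAt_pow (n + 1) s).const_mul C).div_const ((n + 1)! : ℝ)).congr_deriv ?_
    push_cast [factorial_succ, add_tsub_cancel_right]
    field_simp
  exact image_norm_le_of_norm_deriv_right_le_deriv_boundary (a := 0)
    (fun s _ ↦ (hF s).continuousAt.continuousWithinAt) (fun s _ ↦ (hF s).hasDerivWithinAt)
    (by simp [hF0]) hB (fun s hs ↦ hF' s hs.1) ⟨ht, le_rfl⟩

theorem norm_sub_sub_sub_half_smul_le {G G₁ G₂ : ℝ → E} {C : ℝ} {n : ℕ}
    (hG : ∀ t, HasDerivAt G (G₁ t) t) (hG₁ : ∀ t, HasDerivAt G₁ (G₂ t) t)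
    (hG₂ : ∀ t, 0 ≤ t → ‖G₂ t - G₂ 0‖ ≤ C * t ^ n / n !) :
    ‖G 1 - G 0 - G₁ 0 - (1 / 2 : ℝ) • G₂ 0‖ ≤ C / (n + 2)! := by
  have first_order (t : ℝ) (ht : 0 ≤ t) :
      ‖G₁ t - G₁ 0 - t • G₂ 0‖ ≤ C * t ^ (n + 1) / (n + 1)! :=
    norm_le_pow_succ_div_factorial_of_hasDerivAt (F := fun t ↦ G₁ t - G₁ 0 - t • G₂ 0)
      (fun s ↦ (((hG₁ s).sub_const _).sub ((hasDerivAt_id s).smul_const (G₂ 0))).congr_deriv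
        (by simp))
      (by simp) hG₂ ht
  have second_order := norm_le_pow_succ_div_factorial_of_hasDerivAt
    (F := fun t ↦ G t - G 0 - t • G₁ 0 - (t ^ 2 / 2) • G₂ 0)
    (fun s ↦ ((((hG s).sub_const _).sub ((hasDerivAt_id s).smul_const (G₁ 0))).sub
      (((hasDerivAt_pow 2 s).div_const 2).smul_const (G₂ 0))).congr_deriv (by simp))
    (by simp) first_order zero_le_one
  simpa [one_div] using second_order

end OneVariable

theorem min_le_rpow_mul_rpow {a b δ : ℝ} (ha : 0 ≤ a) (hb : 0 ≤ b) (hδ₀ : 0 ≤ δ)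
    (hδ₁ : δ ≤ 1) : min a b ≤ a ^ (1 - δ) * b ^ δ := by
  have hm : 0 ≤ min a b := le_min ha hb
  calc min a b = min a b ^ (1 - δ) * min a b ^ δ := by
        rw [← Real.rpow_add' hm (by norm_num), sub_add_cancel, Real.rpow_one]
    _ ≤ a ^ (1 - δ) * b ^ δ := by
        gcongr
        exacts [min_le_left a b, min_le_right a b]

section TaylorRemainder

variable {E F : Type*} [NormedAddCommGroup E] [NormedSpace ℝ E]
  [NormedAddCommGroup F] [NormedSpace ℝ F] {h : E → F}

noncomputable def taylorRemainderTwo (h : E → F) (v u : E) : F :=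
  h (v + u) - h v - fderiv ℝ h v u - (1 / 2 : ℝ) • iteratedFDeriv ℝ 2 h v ![u, u]

theorem hasDerivAt_apply_add_smul (hh : Differentiable ℝ h) (v u : E) (t : ℝ) :
    HasDerivAt (fun t : ℝ ↦ h (v + t • u)) (fderiv ℝ h (v + t • u) u) t :=
  (hh _).hasFDerivAt.comp_hasDerivAt t
    (((hasDerivAt_id t).smul_const u).const_add v |>.congr_deriv (one_smul ℝ u))

theorem hasDerivAt_fderiv_apply_add_smul (hh : ContDiff ℝ 2 h) (v u : E) (t : ℝ) :
    HasDerivAt (fun t : ℝ ↦ fderiv ℝ h (v + t • u) u)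
      (iteratedFDeriv ℝ 2 h (v + t • u) ![u, u]) t := by
  have hd : Differentiable ℝ (fderiv ℝ h) :=
    (hh.fderiv_right (m := 1) le_rfl).differentiable one_ne_zero
  rw [iteratedFDeriv_two_apply]
  simpa using (hasDerivAt_apply_add_smul hd v u t).clm_apply (hasDerivAt_const t u)

theorem norm_taylorRemainderTwo_le_of_norm_iteratedFDeriv_two_sub_le (hh : ContDiff ℝ 2 h)
    {v u : E} {C : ℝ} {n : ℕ}
    (hC : ∀ t : ℝ, 0 ≤ t →
      ‖iteratedFDeriv ℝ 2 h (v + t • u) - iteratedFDeriv ℝ 2 h v‖ ≤ C * t ^ n / n !) :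
    ‖taylorRemainderTwo h v u‖ ≤ C * ‖u‖ ^ 2 / (n + 2)! := by
  have key := norm_sub_sub_sub_half_smul_le (C := C * ‖u‖ ^ 2) (n := n)
    (hasDerivAt_apply_add_smul (hh.differentiable two_ne_zero) v u)
    (hasDerivAt_fderiv_apply_add_smul hh v u) fun t ht ↦ by
      rw [zero_smul, add_zero, ← sub_apply]
      calc _ ≤ _ := ContinuousMultilinearMap.le_opNorm_mul_pow_of_le _
              (pi_norm_le_iff_of_nonneg (norm_nonneg u) |>.2 (by simp [Fin.forall_fin_two]))
        _ ≤ C * t ^ n / n ! * ‖u‖ ^ 2 := by gcongr; exact hC t ht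
        _ = _ := by ring
  simpa [taylorRemainderTwo] using key

theorem norm_taylorRemainderTwo_le_of_norm_iteratedFDeriv_two_le (hh : ContDiff ℝ 2 h) {M : ℝ}
    (hM : ∀ x, ‖iteratedFDeriv ℝ 2 h x‖ ≤ M) (v u : E) :
    ‖taylorRemainderTwo h v u‖ ≤ M * ‖u‖ ^ 2 := by
  refine (norm_taylorRemainderTwo_le_of_norm_iteratedFDeriv_two_sub_le (C := 2 * M) (n := 0) hh
    fun t _ ↦ by simpa [two_mul] using norm_sub_le_of_le (hM (v + t • u)) (hM v)).trans_eq ?_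
  simp [factorial]
  ring

theorem norm_taylorRemainderTwo_le_of_norm_iteratedFDeriv_three_le (hh : ContDiff ℝ 3 h) {M : ℝ}
    (hM : ∀ x, ‖iteratedFDeriv ℝ 3 h x‖ ≤ M) (v u : E) :
    ‖taylorRemainderTwo h v u‖ ≤ M * ‖u‖ ^ 3 / 6 := by
  have lipschitz (x y : E) :
      ‖iteratedFDeriv ℝ 2 h x - iteratedFDeriv ℝ 2 h y‖ ≤ M * ‖x - y‖ :=
    convex_univ.norm_image_sub_le_of_norm_fderiv_le
      (fun z _ ↦ hh.differentiable_iteratedFDeriv (by norm_num) z)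
      (fun z _ ↦ norm_fderiv_iteratedFDeriv.trans_le (hM z)) (mem_univ y) (mem_univ x)
  refine (norm_taylorRemainderTwo_le_of_norm_iteratedFDeriv_two_sub_le (C := M * ‖u‖) (n := 1)
    (hh.of_le (by norm_num)) fun t ht ↦ by
      simpa [norm_smul, abs_of_nonneg ht, mul_comm t, mul_assoc] using
        lipschitz (v + t • u) v).trans_eq ?_
  simp [factorial]
  ring

theorem norm_taylorRemainderTwo_le_interpolated (hh : ContDiff ℝ 3 h) {M₂ M₃ δ : ℝ}
    (hM₂ : ∀ x, ‖iteratedFDeriv ℝ 2 h x‖ ≤ M₂) (hM₃ : ∀ x, ‖iteratedFDeriv ℝ 3 h x‖ ≤ M₃)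
    (hδ₀ : 0 ≤ δ) (hδ₁ : δ ≤ 1) (v u : E) :
    ‖taylorRemainderTwo h v u‖ ≤ 6 ^ (-δ) * M₂ ^ (1 - δ) * M₃ ^ δ * ‖u‖ ^ (2 + δ) := by
  have hh₂ : ContDiff ℝ 2 h := hh.of_le (by norm_num)
  have hM₂₀ : 0 ≤ M₂ := (norm_nonneg _).trans (hM₂ 0)
  have hM₃₀ : 0 ≤ M₃ := (norm_nonneg _).trans (hM₃ 0)
  have hu : 0 ≤ ‖u‖ := norm_nonneg u
  have split : ‖u‖ ^ (2 + δ) = ‖u‖ ^ ((2 : ℕ) * (1 - δ)) * ‖u‖ ^ ((3 : ℕ) * δ) := by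
    rw [← Real.rpow_add' hu (by push_cast; linarith)]
    push_cast
    ring_nf
  calc ‖taylorRemainderTwo h v u‖ ≤ min (M₂ * ‖u‖ ^ 2) (M₃ * ‖u‖ ^ 3 / 6) :=
        le_min (norm_taylorRemainderTwo_le_of_norm_iteratedFDeriv_two_le hh₂ hM₂ v u)
          (norm_taylorRemainderTwo_le_of_norm_iteratedFDeriv_three_le hh hM₃ v u)
    _ ≤ (M₂ * ‖u‖ ^ 2) ^ (1 - δ) * (M₃ * ‖u‖ ^ 3 / 6) ^ δ :=
        min_le_rpow_mul_rpow (by positivity) (by positivity) hδ₀ hδ₁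
    _ = 6 ^ (-δ) * M₂ ^ (1 - δ) * M₃ ^ δ * ‖u‖ ^ (2 + δ) := by
        rw [Real.mul_rpow hM₂₀ (by positivity), Real.div_rpow (by positivity) (by norm_num),
          Real.mul_rpow hM₃₀ (by positivity), Real.rpow_neg (by norm_num),
          ← Real.rpow_natCast_mul hu, ← Real.rpow_natCast_mul hu, split]
        field_simp

end TaylorRemainder

theorem taylor_remainder_interpolated_bound_general {k : ℕ} (h : EuclideanSpace ℝ (Fin k) → ℝ)
    (hh : ContDiff ℝ 3 h)
    (M2 M3 : ℝ)
    (hM2 : ∀ x, ‖iteratedFDeriv ℝ 2 h x‖ ≤ M2)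
    (hM3 : ∀ x, ‖iteratedFDeriv ℝ 3 h x‖ ≤ M3)
    (δ : ℝ) (hδ : δ ∈ Set.Ioc (0 : ℝ) 1)
    (v w w' : EuclideanSpace ℝ (Fin k)) :
    |h (v + w) - h (v + w') - fderiv ℝ h v (w - w') -
        (1 / 2) * (iteratedFDeriv ℝ 2 h v ![w, w] - iteratedFDeriv ℝ 2 h v ![w', w'])| ≤
      (6 : ℝ) ^ (-δ) * M2 ^ (1 - δ) * M3 ^ δ *
        (‖w‖ ^ (2 + δ) + ‖w‖ ^ (2 * (1 - δ)) * ‖w'‖ ^ (3 * δ) +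
          ‖w‖ ^ (3 * δ) * ‖w'‖ ^ (2 * (1 - δ)) + ‖w'‖ ^ (2 + δ)) := by
  set K := (6 : ℝ) ^ (-δ) * M2 ^ (1 - δ) * M3 ^ δ
  have bound (u) := norm_taylorRemainderTwo_le_interpolated hh hM2 hM3 hδ.1.le hδ.2 v u
  have hK : 0 ≤ K := by
    have := (norm_nonneg _).trans (hM2 0)
    have := (norm_nonneg _).trans (hM3 0)
    positivity
  have hγ : h (v + w) - h (v + w') - fderiv ℝ h v (w - w') -
      (1 / 2) * (iteratedFDeriv ℝ 2 h v ![w, w] - iteratedFDeriv ℝ 2 h v ![w', w'])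
      = taylorRemainderTwo h v w - taylorRemainderTwo h v w' := by
    simp only [taylorRemainderTwo, map_sub, smul_eq_mul]
    ring
  rw [hγ, ← Real.norm_eq_abs]
  have mixed : 0 ≤ K * (‖w‖ ^ (2 * (1 - δ)) * ‖w'‖ ^ (3 * δ) +
      ‖w‖ ^ (3 * δ) * ‖w'‖ ^ (2 * (1 - δ))) := by
    positivity
  calc _ ≤ K * ‖w‖ ^ (2 + δ) + K * ‖w'‖ ^ (2 + δ) :=
        (norm_sub_le _ _).trans (add_le_add (bound w) (bound w'))
    _ ≤ _ := by linarith

/-- For `h ∈ C³_b(ℝ^k, ℝ)`, `δ ∈ (0,1]` and `v, w, w' ∈ ℝ^k`, the quantity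
`γ = h(v+w) − h(v+w') − h⁽¹⁾(v)(w−w') − ½(h⁽²⁾(v)(w,w) − h⁽²⁾(v)(w',w'))` satisfies
`|γ| ≤ 6^{−δ} ‖h⁽²⁾‖_∞^{1−δ} ‖h⁽³⁾‖_∞^δ (‖w‖^{2+δ} + ‖w‖^{2(1−δ)}‖w'‖^{3δ}
  + ‖w‖^{3δ}‖w'‖^{2(1−δ)} + ‖w'‖^{2+δ})`. -/
theorem taylor_remainder_interpolated_bound {k : ℕ} (h : EuclideanSpace ℝ (Fin k) → ℝ)
    (hh : ContDiff ℝ 3 h)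
    (hbd0 : ∃ M, ∀ x, |h x| ≤ M)
    (hbd1 : ∃ M, ∀ x, ‖fderiv ℝ h x‖ ≤ M)
    (M2 M3 : ℝ)
    (hM2 : ∀ x, ‖iteratedFDeriv ℝ 2 h x‖ ≤ M2)
    (hM3 : ∀ x, ‖iteratedFDeriv ℝ 3 h x‖ ≤ M3)
    (δ : ℝ) (hδ : δ ∈ Set.Ioc (0 : ℝ) 1)
    (v w w' : EuclideanSpace ℝ (Fin k)) :
    |h (v + w) - h (v + w') - fderiv ℝ h v (w - w') -
        (1 / 2) * (iteratedFDeriv ℝ 2 h v ![w, w] - iteratedFDeriv ℝ 2 h v ![w', w'])| ≤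
      (6 : ℝ) ^ (-δ) * M2 ^ (1 - δ) * M3 ^ δ *
        (‖w‖ ^ (2 + δ) + ‖w‖ ^ (2 * (1 - δ)) * ‖w'‖ ^ (3 * δ) +
          ‖w‖ ^ (3 * δ) * ‖w'‖ ^ (2 * (1 - δ)) + ‖w'‖ ^ (2 + δ)) :=
  taylor_remainder_interpolated_bound_general h hh M2 M3 hM2 hM3 δ hδ v w w'
end

section
/- Let V, W, W' be ℝ^k-valued random vectors with V independent of (W, W'), E W = E W' = 0, Cov(W) = Cov(W'), E‖W‖^{2+δ} < ∞ and E‖W'‖^{2+δ} < ∞ for some δ ∈ (0,1], and let h ∈ C³_b(ℝ^k). Then |E[h(V+W) − h(V+W')]| ≤ 6^{−δ} ‖h⁽²⁾‖_∞^{1−δ} ‖h⁽³⁾‖_∞^{δ} E( ‖W‖^{2+δ} + ‖W‖^{2(1−δ)}‖W'‖^{3δ} + ‖W‖^{3δ}‖W'‖^{2(1−δ)} + ‖W'‖^{2+δ} ). -/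
/-!
Write `h (v + w) = h v + Dh(v) w + D²h(v)(w, w) / 2 + R(v, w)`. Taylor's theorem bounds the
remainder both by `‖h⁽²⁾‖ ‖w‖²` and by `‖h⁽³⁾‖ ‖w‖³ / 6`, and interpolating between the two bounds
gives `|R(v, w)| ≤ 6^{-δ} ‖h⁽²⁾‖^{1-δ} ‖h⁽³⁾‖^δ ‖w‖^{2+δ}`. Since `V` is independent of `(W, W')`
we may integrate out `W` and `W'` for fixed `V = v`; the Taylor polynomial then has the same
expectation under `W` and `W'`, because it only sees their first and second moments, so only the
remainders are left. This already gives the bound with `E ‖W‖^{2+δ} + E ‖W'‖^{2+δ}`; the mixed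
moments are nonnegative.
-/

open MeasureTheory ProbabilityTheory Set
open scoped ProbabilityTheory Nat InnerProductSpace

theorem taylorWithinEval_Icc_eq_sum {g : ℝ → ℝ} {n : ℕ} (hg : ContDiff ℝ n g) {a b : ℝ}
    (hab : a < b) (x : ℝ) :
    taylorWithinEval g n (Icc a b) a x =
      ∑ k ∈ Finset.range (n + 1), iteratedDeriv k g a * (x - a) ^ k / k ! := by
  rw [taylor_within_apply]
  refine Finset.sum_congr rfl fun k hk => ?_
  rw [iteratedDerivWithin_eq_iteratedDeriv (uniqueDiffOn_Icc hab)
    (hg.contDiffAt.of_le (by exact_mod_cast Finset.mem_range_succ_iff.mp hk))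
    (left_mem_Icc.mpr hab.le), smul_eq_mul]
  ring

theorem taylor_mean_remainder_lagrange_zero_one {g : ℝ → ℝ} {n : ℕ} (hg : ContDiff ℝ (n + 1) g) :
    ∃ c, g 1 - ∑ k ∈ Finset.range (n + 1), iteratedDeriv k g 0 / k ! =
      iteratedDeriv (n + 1) g c / (n + 1)! := by
  have hs : UniqueDiffOn ℝ (Icc (0 : ℝ) 1) := uniqueDiffOn_Icc zero_lt_one
  have hgn : ContDiff ℝ n g := hg.of_le (by norm_cast; omega)
  obtain ⟨c, hc, hTaylor⟩ := taylor_mean_remainder_lagrange (n := n) (x₀ := 0) (x := 1)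
    zero_ne_one (by rw [uIcc_of_le zero_le_one]; exact hgn.contDiffOn)
    (by
      rw [uIcc_of_le zero_le_one, uIoo_of_le zero_le_one]
      exact ((hg.differentiable_iteratedDeriv n (by norm_cast; omega)).differentiableOn).congr
        fun t ht => iteratedDerivWithin_eq_iteratedDeriv hs hgn.contDiffAt
          (Ioo_subset_Icc_self ht))
  refine ⟨c, ?_⟩
  rw [uIoo_of_le zero_le_one] at hc
  rw [uIcc_of_le zero_le_one, taylorWithinEval_Icc_eq_sum hgn zero_lt_one,
    iteratedDerivWithin_eq_iteratedDeriv hs hg.contDiffAt (Ioo_subset_Icc_self hc)] at hTaylor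
  simpa using hTaylor

theorem le_rpow_mul_rpow_of_le_of_le {r A B θ : ℝ} (hr : 0 ≤ r) (hA : r ≤ A) (hB : r ≤ B)
    (hθ0 : 0 ≤ θ) (hθ1 : θ ≤ 1) : r ≤ A ^ (1 - θ) * B ^ θ :=
  calc r = r ^ (1 - θ) * r ^ θ := by
        rw [← Real.rpow_add' hr (by norm_num), sub_add_cancel, Real.rpow_one]
    _ ≤ A ^ (1 - θ) * B ^ θ :=
        mul_le_mul (Real.rpow_le_rpow hr hA (by linarith)) (Real.rpow_le_rpow hr hB hθ0)
          (by positivity) (Real.rpow_nonneg (hr.trans hA) _)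

theorem rpow_mul_rpow_le_rpow_add_rpow {a b p q : ℝ} (ha : 0 ≤ a) (hb : 0 ≤ b) (hp : 0 ≤ p)
    (hq : 0 ≤ q) (hpq : p + q ≠ 0) : a ^ p * b ^ q ≤ a ^ (p + q) + b ^ (p + q) := by
  rcases le_total a b with hab | hba
  · calc a ^ p * b ^ q ≤ b ^ p * b ^ q := by gcongr
      _ = b ^ (p + q) := (Real.rpow_add' hb hpq).symm
      _ ≤ a ^ (p + q) + b ^ (p + q) := le_add_of_nonneg_left (by positivity)
  · calc a ^ p * b ^ q ≤ a ^ p * a ^ q := by gcongr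
      _ = a ^ (p + q) := (Real.rpow_add' ha hpq).symm
      _ ≤ a ^ (p + q) + b ^ (p + q) := le_add_of_nonneg_right (by positivity)

section Taylor

variable {E : Type*} [NormedAddCommGroup E] [NormedSpace ℝ E]

noncomputable def taylorRemainder (n : ℕ) (h : E → ℝ) (x w : E) : ℝ :=
  h (x + w) - ∑ k ∈ Finset.range (n + 1), iteratedFDeriv ℝ k h x (fun _ => w) / k !

theorem continuous_taylorRemainder {h : E → ℝ} (hh : Continuous h) (n : ℕ) (x : E) :
    Continuous (taylorRemainder n h x) := by
  unfold taylorRemainder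
  fun_prop

theorem sum_range_three_iteratedFDeriv (h : E → ℝ) (x w : E) :
    ∑ k ∈ Finset.range 3, iteratedFDeriv ℝ k h x (fun _ => w) / k ! =
      h x + fderiv ℝ h x w + fderiv ℝ (fderiv ℝ h) x w w / 2 := by
  simp [Finset.sum_range_succ, iteratedFDeriv_two_apply]

theorem abs_iteratedFDeriv_apply_le {h : E → ℝ} {k : ℕ} {M : ℝ}
    (hM : ∀ y, ‖iteratedFDeriv ℝ k h y‖ ≤ M) (y w : E) :
    |iteratedFDeriv ℝ k h y (fun _ => w)| ≤ M * ‖w‖ ^ k :=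
  ((iteratedFDeriv ℝ k h y).le_opNorm_mul_pow_of_le (pi_norm_const_le w)).trans
    (by gcongr; exact hM y)

theorem iteratedDeriv_comp_add_smul {h : E → ℝ} {n : ℕ} (hh : ContDiff ℝ n h) (x w : E) {k : ℕ}
    (hk : k ≤ n) (t : ℝ) :
    iteratedDeriv k (fun t : ℝ => h (x + t • w)) t =
      iteratedFDeriv ℝ k h (x + t • w) (fun _ => w) := by
  have hcomp : (fun t : ℝ => h (x + t • w)) =
      (fun z => h (x + z)) ∘ ContinuousLinearMap.toSpanSingleton ℝ w := by
    ext t; simp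
  have hshift : ContDiff ℝ n (fun z => h (x + z)) := hh.comp (contDiff_const.add contDiff_id)
  rw [iteratedDeriv_eq_iteratedFDeriv, hcomp,
    ContinuousLinearMap.iteratedFDeriv_comp_right _ hshift _ (by exact_mod_cast hk)]
  simp [iteratedFDeriv_comp_add_left]

theorem taylorRemainder_eq_sub_sum_iteratedDeriv {h : E → ℝ} {n : ℕ} (hh : ContDiff ℝ n h) (x w : E) :
    taylorRemainder n h x w = h (x + (1 : ℝ) • w) -
      ∑ k ∈ Finset.range (n + 1), iteratedDeriv k (fun t : ℝ => h (x + t • w)) 0 / k ! := by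
  simp only [taylorRemainder, one_smul]
  congr 1
  refine Finset.sum_congr rfl fun k hk => ?_
  rw [iteratedDeriv_comp_add_smul hh x w (Finset.mem_range_succ_iff.mp hk), zero_smul, add_zero]

theorem abs_taylorRemainder_le {h : E → ℝ} {n : ℕ} (hh : ContDiff ℝ (n + 1) h) {M : ℝ}
    (hM : ∀ y, ‖iteratedFDeriv ℝ (n + 1) h y‖ ≤ M) (x w : E) :
    |taylorRemainder n h x w| ≤ M / (n + 1)! * ‖w‖ ^ (n + 1) := by
  have hline : ContDiff ℝ (n + 1) (fun t : ℝ => h (x + t • w)) :=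
    hh.comp (contDiff_const.add (contDiff_id.smul contDiff_const))
  obtain ⟨c, hc⟩ := taylor_mean_remainder_lagrange_zero_one hline
  rw [taylorRemainder_eq_sub_sum_iteratedDeriv (hh.of_le (by norm_cast; omega)), hc,
    iteratedDeriv_comp_add_smul (n := n + 1) (by exact_mod_cast hh) x w le_rfl, abs_div,
    Nat.abs_cast, div_mul_eq_mul_div]
  gcongr
  exact abs_iteratedFDeriv_apply_le hM _ w

theorem abs_taylorRemainder_succ_le {h : E → ℝ} {n : ℕ} (hh : ContDiff ℝ (n + 1) h) {M : ℝ}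
    (hM : ∀ y, ‖iteratedFDeriv ℝ (n + 1) h y‖ ≤ M) (x w : E) :
    |taylorRemainder (n + 1) h x w| ≤ 2 * M / (n + 1)! * ‖w‖ ^ (n + 1) := by
  have hsucc : taylorRemainder (n + 1) h x w =
      taylorRemainder n h x w - iteratedFDeriv ℝ (n + 1) h x (fun _ => w) / (n + 1)! := by
    simp only [taylorRemainder, Finset.sum_range_succ _ (n + 1)]
    ring
  have hterm : |iteratedFDeriv ℝ (n + 1) h x (fun _ => w) / (n + 1)!| ≤
      M / (n + 1)! * ‖w‖ ^ (n + 1) := by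
    rw [abs_div, Nat.abs_cast, div_mul_eq_mul_div]
    gcongr
    exact abs_iteratedFDeriv_apply_le hM x w
  calc |taylorRemainder (n + 1) h x w|
      ≤ |taylorRemainder n h x w| + |iteratedFDeriv ℝ (n + 1) h x (fun _ => w) / (n + 1)!| := by
        rw [hsucc]; exact abs_sub _ _
    _ ≤ M / (n + 1)! * ‖w‖ ^ (n + 1) + M / (n + 1)! * ‖w‖ ^ (n + 1) :=
        add_le_add (abs_taylorRemainder_le hh hM x w) hterm
    _ = 2 * M / (n + 1)! * ‖w‖ ^ (n + 1) := by ring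

theorem abs_taylorRemainder_two_le {h : E → ℝ} (hh : ContDiff ℝ 3 h) {M2 M3 δ : ℝ}
    (hM2 : ∀ x, ‖iteratedFDeriv ℝ 2 h x‖ ≤ M2) (hM3 : ∀ x, ‖iteratedFDeriv ℝ 3 h x‖ ≤ M3)
    (hδ0 : 0 ≤ δ) (hδ1 : δ ≤ 1) (x w : E) :
    |taylorRemainder 2 h x w| ≤ 6 ^ (-δ) * M2 ^ (1 - δ) * M3 ^ δ * ‖w‖ ^ (2 + δ) := by
  have hM2nn : 0 ≤ M2 := (norm_nonneg _).trans (hM2 0)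
  have hM3nn : 0 ≤ M3 := (norm_nonneg _).trans (hM3 0)
  have hsq : |taylorRemainder 2 h x w| ≤ M2 * ‖w‖ ^ 2 := by
    simpa using abs_taylorRemainder_succ_le (n := 1) (hh.of_le (by norm_num)) hM2 x w
  have hcube : |taylorRemainder 2 h x w| ≤ M3 / 6 * ‖w‖ ^ 3 := by
    simpa [Nat.factorial] using abs_taylorRemainder_le (n := 2) hh hM3 x w
  have hpow : ‖w‖ ^ ((2 : ℕ) * (1 - δ)) * ‖w‖ ^ ((3 : ℕ) * δ) = ‖w‖ ^ (2 + δ) := by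
    rw [← Real.rpow_add' (norm_nonneg w) (by push_cast; linarith)]
    push_cast; ring_nf
  calc |taylorRemainder 2 h x w|
      ≤ (M2 * ‖w‖ ^ 2) ^ (1 - δ) * (M3 / 6 * ‖w‖ ^ 3) ^ δ :=
        le_rpow_mul_rpow_of_le_of_le (abs_nonneg _) hsq hcube hδ0 hδ1
    _ = 6 ^ (-δ) * M2 ^ (1 - δ) * M3 ^ δ * ‖w‖ ^ (2 + δ) := by
        rw [Real.mul_rpow hM2nn (by positivity), Real.mul_rpow (by positivity) (by positivity),
          Real.div_rpow hM3nn (by norm_num), Real.rpow_neg (by norm_num),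
          ← Real.rpow_natCast_mul (norm_nonneg w), ← Real.rpow_natCast_mul (norm_nonneg w),
          ← hpow]
        ring

end Taylor

section Probability

variable {Ω : Type*} {mΩ : MeasurableSpace Ω} {μ : Measure Ω}

theorem memLp_two_of_integrable_norm_rpow {F : Type*} [NormedAddCommGroup F] [IsFiniteMeasure μ]
    {X : Ω → F} (hXm : AEStronglyMeasurable X μ) {p : ℝ} (hp : 2 ≤ p)
    (hX : Integrable (fun ω => ‖X ω‖ ^ p) μ) : MemLp X 2 μ := by
  have hp0 : 0 < p := by linarith
  refine ((integrable_norm_rpow_iff hXm (by simpa using hp0) ENNReal.ofReal_ne_top).1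
    (by rwa [ENNReal.toReal_ofReal hp0.le])).mono_exponent ?_
  rw [← ENNReal.ofReal_ofNat 2]
  exact ENNReal.ofReal_le_ofReal hp

section Moments

variable {E : Type*} [NormedAddCommGroup E]

theorem MeasureTheory.MemLp.integrable_bilin_self [NormedSpace ℝ E] {X : Ω → E}
    (hX : MemLp X 2 μ) (B : E →L[ℝ] E →L[ℝ] ℝ) : Integrable (fun ω => B (X ω) (X ω)) μ := by
  refine Integrable.mono' ((hX.integrable_norm_pow two_ne_zero).const_mul ‖B‖)
    ((B.continuous₂.comp (continuous_id.prodMk continuous_id)).comp_aestronglyMeasurable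
      hX.1) (ae_of_all _ fun ω => ?_)
  simpa [sq, mul_assoc] using B.le_opNorm₂ (X ω) (X ω)

theorem integral_comp_add_eq [NormedSpace ℝ E] [CompleteSpace E] [IsProbabilityMeasure μ]
    {h : E → ℝ} (v : E) {X : Ω → E} (hX : MemLp X 2 μ)
    (hR : Integrable (fun ω => taylorRemainder 2 h v (X ω)) μ) :
    ∫ ω, h (v + X ω) ∂μ = h v + fderiv ℝ h v (∫ ω, X ω ∂μ) +
      (∫ ω, fderiv ℝ (fderiv ℝ h) v (X ω) (X ω) ∂μ) / 2 +
        ∫ ω, taylorRemainder 2 h v (X ω) ∂μ := by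
  have hX1 : Integrable X μ := memLp_one_iff_integrable.1 (hX.mono_exponent one_le_two)
  have hlin : Integrable (fun ω => fderiv ℝ h v (X ω)) μ := (fderiv ℝ h v).integrable_comp hX1
  have hquad : Integrable (fun ω => fderiv ℝ (fderiv ℝ h) v (X ω) (X ω) / 2) μ :=
    (hX.integrable_bilin_self _).div_const 2
  have haffine : Integrable (fun ω => h v + fderiv ℝ h v (X ω)) μ := (integrable_const _).add hlin
  have hpoly : Integrable (fun ω => h v + fderiv ℝ h v (X ω) +
      fderiv ℝ (fderiv ℝ h) v (X ω) (X ω) / 2) μ := haffine.add hquad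
  have hsplit : ∀ ω, h (v + X ω) = h v + fderiv ℝ h v (X ω) +
      fderiv ℝ (fderiv ℝ h) v (X ω) (X ω) / 2 + taylorRemainder 2 h v (X ω) := fun ω => by
    rw [taylorRemainder, sum_range_three_iteratedFDeriv]; ring
  simp_rw [hsplit]
  rw [integral_add hpoly hR, integral_add haffine hquad, integral_add (integrable_const _) hlin,
    integral_const, integral_div, (fderiv ℝ h v).integral_comp_comm hX1]
  simp

variable [InnerProductSpace ℝ E] [FiniteDimensional ℝ E]

theorem integral_bilin_self_eq_of_integral_inner_mul_inner_eq {X Y : Ω → E}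
    (hX : MemLp X 2 μ) (hY : MemLp Y 2 μ)
    (hcov : ∀ s t : E, ∫ ω, ⟪s, X ω⟫_ℝ * ⟪t, X ω⟫_ℝ ∂μ = ∫ ω, ⟪s, Y ω⟫_ℝ * ⟪t, Y ω⟫_ℝ ∂μ)
    (B : E →L[ℝ] E →L[ℝ] ℝ) : ∫ ω, B (X ω) (X ω) ∂μ = ∫ ω, B (Y ω) (Y ω) ∂μ := by
  set b := stdOrthonormalBasis ℝ E
  have hexpand : ∀ x, B x x = ∑ i, ∑ j, ⟪b i, x⟫_ℝ * ⟪b j, x⟫_ℝ * B (b i) (b j) := by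
    intro x
    conv_lhs => rw [← b.sum_repr' x]
    simp only [map_sum, map_smul, _root_.sum_apply, _root_.smul_apply, smul_eq_mul,
      Finset.mul_sum]
    rw [Finset.sum_comm]
    exact Finset.sum_congr rfl fun i _ => Finset.sum_congr rfl fun j _ => by ring
  have hint : ∀ {Z : Ω → E}, MemLp Z 2 μ → ∀ i j,
      Integrable (fun ω => ⟪b i, Z ω⟫_ℝ * ⟪b j, Z ω⟫_ℝ * B (b i) (b j)) μ := fun hZ i j =>
    ((hZ.const_inner (b i)).integrable_mul (hZ.const_inner (b j))).mul_const _
  simp_rw [hexpand]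
  rw [integral_finsetSum _ fun i _ => integrable_finsetSum _ fun j _ => hint hX i j,
    integral_finsetSum _ fun i _ => integrable_finsetSum _ fun j _ => hint hY i j]
  refine Finset.sum_congr rfl fun i _ => ?_
  rw [integral_finsetSum _ fun j _ => hint hX i j, integral_finsetSum _ fun j _ => hint hY i j]
  refine Finset.sum_congr rfl fun j _ => ?_
  rw [integral_mul_const, integral_mul_const, hcov]

theorem abs_integral_comp_add_sub_le [IsProbabilityMeasure μ] {h : E → ℝ} (hh : ContDiff ℝ 3 h)
    {M2 M3 δ : ℝ} (hM2 : ∀ x, ‖iteratedFDeriv ℝ 2 h x‖ ≤ M2)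
    (hM3 : ∀ x, ‖iteratedFDeriv ℝ 3 h x‖ ≤ M3) (hδ0 : 0 ≤ δ) (hδ1 : δ ≤ 1) {X Y : Ω → E}
    (hXm : AEStronglyMeasurable X μ) (hYm : AEStronglyMeasurable Y μ)
    (hXint : Integrable (fun ω => ‖X ω‖ ^ (2 + δ)) μ)
    (hYint : Integrable (fun ω => ‖Y ω‖ ^ (2 + δ)) μ) (hmean : ∫ ω, X ω ∂μ = ∫ ω, Y ω ∂μ)
    (hcov : ∀ s t : E, ∫ ω, ⟪s, X ω⟫_ℝ * ⟪t, X ω⟫_ℝ ∂μ = ∫ ω, ⟪s, Y ω⟫_ℝ * ⟪t, Y ω⟫_ℝ ∂μ)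
    (v : E) :
    |∫ ω, h (v + X ω) ∂μ - ∫ ω, h (v + Y ω) ∂μ| ≤
      6 ^ (-δ) * M2 ^ (1 - δ) * M3 ^ δ * (∫ ω, ‖X ω‖ ^ (2 + δ) ∂μ + ∫ ω, ‖Y ω‖ ^ (2 + δ) ∂μ) := by
  set C := 6 ^ (-δ) * M2 ^ (1 - δ) * M3 ^ δ
  have hR : ∀ w, |taylorRemainder 2 h v w| ≤ C * ‖w‖ ^ (2 + δ) :=
    abs_taylorRemainder_two_le hh hM2 hM3 hδ0 hδ1 v
  have hRint : ∀ {Z : Ω → E}, AEStronglyMeasurable Z μ →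
      Integrable (fun ω => ‖Z ω‖ ^ (2 + δ)) μ →
      Integrable (fun ω => taylorRemainder 2 h v (Z ω)) μ := fun hZm hZ =>
    (hZ.const_mul C).mono'
      ((continuous_taylorRemainder hh.continuous 2 v).comp_aestronglyMeasurable hZm)
      (ae_of_all _ fun ω => hR _)
  have hRle : ∀ {Z : Ω → E}, Integrable (fun ω => ‖Z ω‖ ^ (2 + δ)) μ →
      |∫ ω, taylorRemainder 2 h v (Z ω) ∂μ| ≤ C * ∫ ω, ‖Z ω‖ ^ (2 + δ) ∂μ := fun hZ => by
    rw [← integral_const_mul, ← Real.norm_eq_abs]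
    exact norm_integral_le_of_norm_le (hZ.const_mul C)
      (ae_of_all _ fun ω => (Real.norm_eq_abs _).trans_le (hR _))
  have hX2 := memLp_two_of_integrable_norm_rpow hXm (by linarith) hXint
  have hY2 := memLp_two_of_integrable_norm_rpow hYm (by linarith) hYint
  rw [integral_comp_add_eq v hX2 (hRint hXm hXint), integral_comp_add_eq v hY2 (hRint hYm hYint),
    hmean, integral_bilin_self_eq_of_integral_inner_mul_inner_eq hX2 hY2 hcov,
    add_sub_add_left_eq_sub, mul_add]
  exact (abs_sub _ _).trans (add_le_add (hRle hXint) (hRle hYint))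

end Moments

theorem ProbabilityTheory.IndepFun.integral_comp_eq_integral_integral {α β G : Type*}
    [MeasurableSpace α] [MeasurableSpace β] [NormedAddCommGroup G] [NormedSpace ℝ G]
    [IsFiniteMeasure μ] {V : Ω → α} {Z : Ω → β} (hVZ : IndepFun V Z μ)
    (hV : AEMeasurable V μ) (hZ : AEMeasurable Z μ) {f : α → β → G}
    (hf : Integrable (Function.uncurry f) ((μ.map V).prod (μ.map Z))) :
    ∫ ω, f (V ω) (Z ω) ∂μ = ∫ v, ∫ ω, f v (Z ω) ∂μ ∂(μ.map V) := by
  have hlaw : μ.map (fun ω => (V ω, Z ω)) = (μ.map V).prod (μ.map Z) :=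
    (indepFun_iff_map_prod_eq_prod_map_map hV hZ).1 hVZ
  calc ∫ ω, f (V ω) (Z ω) ∂μ = ∫ p, Function.uncurry f p ∂(μ.map fun ω => (V ω, Z ω)) := by
        rw [integral_map (hV.prodMk hZ) (hlaw ▸ hf.aestronglyMeasurable)]; rfl
    _ = ∫ v, ∫ z, f v z ∂(μ.map Z) ∂(μ.map V) := by rw [hlaw, integral_prod _ hf]; rfl
    _ = ∫ v, ∫ ω, f v (Z ω) ∂μ ∂(μ.map V) := integral_congr_ae <| hf.prod_right_ae.mono
        fun v hv => integral_map hZ hv.aestronglyMeasurable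

theorem Continuous.integrable_comp_of_abs_le {E : Type*} [TopologicalSpace E]
    [MeasurableSpace E] [OpensMeasurableSpace E] [IsFiniteMeasure μ] {h : E → ℝ}
    (hh : Continuous h) {M : ℝ} (hM : ∀ x, |h x| ≤ M) {Y : Ω → E} (hY : AEMeasurable Y μ) :
    Integrable (fun ω => h (Y ω)) μ :=
  .of_bound (hh.measurable.comp_aemeasurable hY).aestronglyMeasurable M (ae_of_all _ fun _ => hM _)

theorem ProbabilityTheory.IndepFun.integral_comp_add_sub_eq_integral_map {E : Type*}
    [NormedAddCommGroup E] [MeasurableSpace E] [BorelSpace E] [SecondCountableTopology E]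
    [IsFiniteMeasure μ] {V W W' : Ω → E} (hindep : IndepFun V (fun ω => (W ω, W' ω)) μ)
    (hVm : AEMeasurable V μ) (hWm : AEMeasurable W μ) (hW'm : AEMeasurable W' μ) {h : E → ℝ}
    (hh : Continuous h) {M : ℝ} (hM : ∀ x, |h x| ≤ M) :
    ∫ ω, h (V ω + W ω) ∂μ - ∫ ω, h (V ω + W' ω) ∂μ =
      ∫ v, (∫ ω, h (v + W ω) ∂μ - ∫ ω, h (v + W' ω) ∂μ) ∂(μ.map V) := by
  have hdisint := hindep.integral_comp_eq_integral_integral hVm (hWm.prodMk hW'm)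
    (f := fun v p => h (v + p.1) - h (v + p.2)) <| .of_bound (by fun_prop) (M + M) <|
      ae_of_all _ fun _ => (abs_sub _ _).trans (add_le_add (hM _) (hM _))
  rw [← integral_sub (hh.integrable_comp_of_abs_le hM (Y := fun ω => V ω + W ω) (hVm.add hWm))
    (hh.integrable_comp_of_abs_le hM (Y := fun ω => V ω + W' ω) (hVm.add hW'm))]
  exact hdisint.trans (integral_congr_ae (ae_of_all _ fun v =>
    integral_sub (hh.integrable_comp_of_abs_le hM (aemeasurable_const.add hWm))
      (hh.integrable_comp_of_abs_le hM (aemeasurable_const.add hW'm))))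

theorem integral_rpow_add_integral_rpow_le {a b : Ω → ℝ} (ha : 0 ≤ a) (hb : 0 ≤ b)
    (ham : AEMeasurable a μ) (hbm : AEMeasurable b μ) {δ : ℝ} (hδ0 : 0 ≤ δ) (hδ1 : δ ≤ 1)
    (hai : Integrable (fun ω => a ω ^ (2 + δ)) μ) (hbi : Integrable (fun ω => b ω ^ (2 + δ)) μ) :
    ∫ ω, a ω ^ (2 + δ) ∂μ + ∫ ω, b ω ^ (2 + δ) ∂μ ≤
      ∫ ω, (a ω ^ (2 + δ) + a ω ^ (2 * (1 - δ)) * b ω ^ (3 * δ) +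
        a ω ^ (3 * δ) * b ω ^ (2 * (1 - δ)) + b ω ^ (2 + δ)) ∂μ := by
  have hcross : ∀ {p q : ℝ}, 0 ≤ p → 0 ≤ q → p + q = 2 + δ →
      Integrable (fun ω => a ω ^ p * b ω ^ q) μ := fun {p q} hp hq hpq =>
    (hai.add hbi).mono' ((ham.pow_const p).mul (hbm.pow_const q)).aestronglyMeasurable <|
      ae_of_all _ fun ω => by
        rw [Real.norm_of_nonneg
          (mul_nonneg (Real.rpow_nonneg (ha ω) _) (Real.rpow_nonneg (hb ω) _)), ← hpq]
        exact rpow_mul_rpow_le_rpow_add_rpow (ha ω) (hb ω) hp hq (by rw [hpq]; linarith)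
  have h1 := hcross (p := 2 * (1 - δ)) (q := 3 * δ) (by linarith) (by linarith) (by ring)
  have h2 := hcross (p := 3 * δ) (q := 2 * (1 - δ)) (by linarith) (by linarith) (by ring)
  rw [← integral_add hai hbi]
  refine integral_mono (hai.add hbi) (((hai.add h1).add h2).add hbi) fun ω => ?_
  have := mul_nonneg (Real.rpow_nonneg (ha ω) (2 * (1 - δ))) (Real.rpow_nonneg (hb ω) (3 * δ))
  have := mul_nonneg (Real.rpow_nonneg (ha ω) (3 * δ)) (Real.rpow_nonneg (hb ω) (2 * (1 - δ)))
  linarith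

end Probability

theorem lindeberg_single_summand_general {k : ℕ} {Ω : Type*} [MeasureSpace Ω]
    [IsProbabilityMeasure (ℙ : Measure Ω)]
    (δ : ℝ) (hδ : δ ∈ Set.Ioc (0 : ℝ) 1)
    (V W W' : Ω → EuclideanSpace ℝ (Fin k))
    (hVm : AEMeasurable V) (hWm : AEMeasurable W) (hW'm : AEMeasurable W')
    (hindep : IndepFun V (fun ω => (W ω, W' ω)))
    (hWcent : ∫ ω, W ω = 0) (hW'cent : ∫ ω, W' ω = 0)
    (hcov : ∀ s t : EuclideanSpace ℝ (Fin k),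
      ∫ ω, (inner ℝ s (W ω) : ℝ) * (inner ℝ t (W ω) : ℝ) =
        ∫ ω, (inner ℝ s (W' ω) : ℝ) * (inner ℝ t (W' ω) : ℝ))
    (hWint : Integrable (fun ω => ‖W ω‖ ^ (2 + δ)))
    (hW'int : Integrable (fun ω => ‖W' ω‖ ^ (2 + δ)))
    (h : EuclideanSpace ℝ (Fin k) → ℝ) (hh : ContDiff ℝ 3 h)
    (hbd0 : ∃ M, ∀ x, |h x| ≤ M)
    (M2 M3 : ℝ)
    (hM2 : ∀ x, ‖iteratedFDeriv ℝ 2 h x‖ ≤ M2)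
    (hM3 : ∀ x, ‖iteratedFDeriv ℝ 3 h x‖ ≤ M3) :
    |∫ ω, h (V ω + W ω) - ∫ ω, h (V ω + W' ω)| ≤
      (6 : ℝ) ^ (-δ) * M2 ^ (1 - δ) * M3 ^ δ *
        ∫ ω, (‖W ω‖ ^ (2 + δ) + ‖W ω‖ ^ (2 * (1 - δ)) * ‖W' ω‖ ^ (3 * δ) +
          ‖W ω‖ ^ (3 * δ) * ‖W' ω‖ ^ (2 * (1 - δ)) + ‖W' ω‖ ^ (2 + δ)) := by
  obtain ⟨hδ0, hδ1⟩ := hδ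
  obtain ⟨M0, hM0⟩ := hbd0
  have hC : 0 ≤ (6 : ℝ) ^ (-δ) * M2 ^ (1 - δ) * M3 ^ δ := by
    have := (norm_nonneg _).trans (hM2 0)
    have := (norm_nonneg _).trans (hM3 0)
    positivity
  have := Measure.isProbabilityMeasure_map (μ := ℙ) hVm
  -- the left-hand side parses as `∫ ω, (h (V ω + W ω) - c)` with the constant `c = E h(V + W')`
  have hlhs : ∫ ω, h (V ω + W ω) - ∫ ω, h (V ω + W' ω) =
      (∫ ω, h (V ω + W ω)) - ∫ ω, h (V ω + W' ω) := by
    rw [integral_sub (hh.continuous.integrable_comp_of_abs_le hM0 (Y := fun ω => V ω + W ω)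
      (hVm.add hWm)) (integrable_const _), integral_const, probReal_univ, one_smul]
  calc |∫ ω, h (V ω + W ω) - ∫ ω, h (V ω + W' ω)|
      = ‖∫ v, ((∫ ω, h (v + W ω)) - ∫ ω, h (v + W' ω)) ∂(Measure.map V ℙ)‖ := by
        rw [hlhs, hindep.integral_comp_add_sub_eq_integral_map hVm hWm hW'm hh.continuous hM0,
          Real.norm_eq_abs]
    _ ≤ (6 : ℝ) ^ (-δ) * M2 ^ (1 - δ) * M3 ^ δ *
          ((∫ ω, ‖W ω‖ ^ (2 + δ)) + ∫ ω, ‖W' ω‖ ^ (2 + δ)) := by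
        simpa using norm_integral_le_of_norm_le_const (ae_of_all (Measure.map V ℙ) fun v =>
          (Real.norm_eq_abs _).trans_le <| abs_integral_comp_add_sub_le hh hM2 hM3 hδ0.le hδ1
            hWm.aestronglyMeasurable hW'm.aestronglyMeasurable hWint hW'int
            (hWcent.trans hW'cent.symm) hcov v)
    _ ≤ _ := mul_le_mul_of_nonneg_left (integral_rpow_add_integral_rpow_le
          (fun _ => norm_nonneg _) (fun _ => norm_nonneg _) hWm.norm hW'm.norm hδ0.le hδ1 hWint
          hW'int) hC

/-- Single-summand Lindeberg estimate: if `V` is independent of `(W, W')`, `W` and `W'` are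
centered with equal covariances and finite `(2+δ)`-moments, and `h ∈ C³_b(ℝ^k)`, then
`|E[h(V+W) − h(V+W')]| ≤ 6^{−δ}‖h⁽²⁾‖_∞^{1−δ}‖h⁽³⁾‖_∞^δ
  E(‖W‖^{2+δ} + ‖W‖^{2(1−δ)}‖W'‖^{3δ} + ‖W‖^{3δ}‖W'‖^{2(1−δ)} + ‖W'‖^{2+δ})`. -/
theorem lindeberg_single_summand {k : ℕ} {Ω : Type*} [MeasureSpace Ω]
    [IsProbabilityMeasure (ℙ : Measure Ω)]
    (δ : ℝ) (hδ : δ ∈ Set.Ioc (0 : ℝ) 1)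
    (V W W' : Ω → EuclideanSpace ℝ (Fin k))
    (hVm : AEMeasurable V) (hWm : AEMeasurable W) (hW'm : AEMeasurable W')
    (hindep : IndepFun V (fun ω => (W ω, W' ω)))
    (hWcent : ∫ ω, W ω = 0) (hW'cent : ∫ ω, W' ω = 0)
    (hcov : ∀ s t : EuclideanSpace ℝ (Fin k),
      ∫ ω, (inner ℝ s (W ω) : ℝ) * (inner ℝ t (W ω) : ℝ) =
        ∫ ω, (inner ℝ s (W' ω) : ℝ) * (inner ℝ t (W' ω) : ℝ))
    (hWint : Integrable (fun ω => ‖W ω‖ ^ (2 + δ)))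
    (hW'int : Integrable (fun ω => ‖W' ω‖ ^ (2 + δ)))
    (h : EuclideanSpace ℝ (Fin k) → ℝ) (hh : ContDiff ℝ 3 h)
    (hbd0 : ∃ M, ∀ x, |h x| ≤ M)
    (hbd1 : ∃ M, ∀ x, ‖fderiv ℝ h x‖ ≤ M)
    (M2 M3 : ℝ)
    (hM2 : ∀ x, ‖iteratedFDeriv ℝ 2 h x‖ ≤ M2)
    (hM3 : ∀ x, ‖iteratedFDeriv ℝ 3 h x‖ ≤ M3) :
    |∫ ω, h (V ω + W ω) - ∫ ω, h (V ω + W' ω)| ≤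
      (6 : ℝ) ^ (-δ) * M2 ^ (1 - δ) * M3 ^ δ *
        ∫ ω, (‖W ω‖ ^ (2 + δ) + ‖W ω‖ ^ (2 * (1 - δ)) * ‖W' ω‖ ^ (3 * δ) +
          ‖W ω‖ ^ (3 * δ) * ‖W' ω‖ ^ (2 * (1 - δ)) + ‖W' ω‖ ^ (2 + δ)) :=
  lindeberg_single_summand_general δ hδ V W W' hVm hWm hW'm hindep hWcent hW'cent hcov hWint hW'int
    h hh hbd0 M2 M3 hM2 hM3
end
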